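/- Let L be a split δ Jordan-Lie algebra with symmetric root system Λ, α ∈ Λ, and γ ∈ Λ with γ ∉ Λ_α. Then γ([L_β, L_{-β}]) = 0 for every β ∈ Λ_α, i.e., γ vanishes on the span of the brackets [L_β, L_{-β}] for β connected to α. -/

import Mathlib

/-!
Take `w ≠ 0` in `L_γ`. The bracket `[L_β, L_γ]` lies in `L_{δ(β+γ)}`; if it were nonzero, either
`γ = -β` or `δ(β+γ)` would be a root, and in both cases a connection from `α` to `β` would
extend to one to `γ`. So `[L_{±β}, w] = 0`, the δ-Jacobi identity gives `[[x,y], w] = 0`, and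
`[h, w] = γ(h) w` forces `γ(h) = 0`.
-/

/-- A δ Jordan-Lie algebra: a vector space with a bilinear bracket satisfying
`[x,y] = -δ[y,x]` and `[x,[y,z]] = δ[[x,y],z] + δ[y,[x,z]]` with `δ = ±1`. -/
structure DeltaJordanLie (K L : Type*) [Field K] [AddCommGroup L] [Module K L] where
  br : L →ₗ[K] L →ₗ[K] L
  delta : K
  delta_pm : delta = 1 ∨ delta = -1
  anti : ∀ x y : L, br x y = -(delta • br y x)
  jacobi : ∀ x y z : L, br x (br y z) = delta • br (br x y) z + delta • br y (br x z)

variable {K L : Type*} [Field K] [AddCommGroup L] [Module K L]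

/-- The root space `L_α = {v ∈ L : [h,v] = α(h)v for all h ∈ H}`. -/
def DeltaJordanLie.rootSpace (J : DeltaJordanLie K L) (H : Submodule K L)
    (α : Module.Dual K H) : Submodule K L where
  carrier := {v : L | ∀ h : H, J.br (h : L) v = α h • v}
  zero_mem' := by intro h; simp
  add_mem' := by intro a b ha hb h; simp [ha h, hb h, smul_add]
  smul_mem' := by intro c a ha h; rw [map_smul, ha h, smul_comm]

/-- The root system `Λ = {α ∈ H* \ {0} : L_α ≠ 0}`. -/
def DeltaJordanLie.roots (J : DeltaJordanLie K L) (H : Submodule K L) :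
    Set (Module.Dual K H) :=
  {α | α ≠ 0 ∧ J.rootSpace H α ≠ ⊥}

/-- `H` is a splitting Cartan subalgebra: a maximal abelian subalgebra such that
`L` decomposes as the direct sum of the simultaneous eigenspaces `L_α`, with `L_0 = H`. -/
structure DeltaJordanLie.IsSplitting (J : DeltaJordanLie K L) (H : Submodule K L) : Prop where
  abelian : ∀ x ∈ H, ∀ y ∈ H, J.br x y = 0
  maximal : ∀ H' : Submodule K L, H ≤ H' →
      (∀ x ∈ H', ∀ y ∈ H', J.br x y = 0) → H' = H
  zero_rootSpace : J.rootSpace H 0 = H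
  indep : iSupIndep (fun α : Module.Dual K H => J.rootSpace H α)
  decomp : (⨆ α : Module.Dual K H, J.rootSpace H α) = ⊤

/-- The root system is symmetric. -/
def DeltaJordanLie.SymmetricRoots (J : DeltaJordanLie K L) (H : Submodule K L) : Prop :=
  ∀ α ∈ J.roots H, -α ∈ J.roots H

/-- The δ-twisted partial sums of a sequence of roots:
`s₀ = f 0`, `s_{k+1} = δ • (s_k + f (k+1))`, so that
`s_k = δ^k f 0 + δ^k f 1 + δ^{k-1} f 2 + ⋯ + δ f k`. -/
def connSum {H : Submodule K L} (d : K) (f : ℕ → Module.Dual K H) : ℕ → Module.Dual K H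
  | 0 => f 0
  | k + 1 => d • (connSum d f k + f (k + 1))

/-- `f 0, …, f n` is a connection from `α` to `β`: all terms are roots, `f 0 = α`,
all proper δ-twisted partial sums are roots, and the final sum is `±β`. -/
def IsConnection (J : DeltaJordanLie K L) (H : Submodule K L)
    (α β : Module.Dual K H) (n : ℕ) (f : ℕ → Module.Dual K H) : Prop :=
  (∀ i ≤ n, f i ∈ J.roots H) ∧ f 0 = α ∧
  (∀ k < n, connSum J.delta f k ∈ J.roots H) ∧
  (connSum J.delta f n = β ∨ connSum J.delta f n = -β)

/-- `α` and `β` are connected. -/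
def Connected (J : DeltaJordanLie K L) (H : Submodule K L)
    (α β : Module.Dual K H) : Prop :=
  ∃ n f, IsConnection J H α β n f

/-- `Λ_α`: the set of nonzero roots connected to `α`. -/
def connectedRoots (J : DeltaJordanLie K L) (H : Submodule K L)
    (α : Module.Dual K H) : Set (Module.Dual K H) :=
  {β ∈ J.roots H | Connected J H α β}

/-- An ideal of a δ Jordan-Lie algebra: a submodule with `[I,L] ⊆ I` and `[L,I] ⊆ I`. -/
def IsIdeal (J : DeltaJordanLie K L) (I : Submodule K L) : Prop :=
  ∀ x ∈ I, ∀ y : L, J.br x y ∈ I ∧ J.br y x ∈ I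

/-- `H_S = span{[L_β, L_{-β}] : β ∈ S}`. -/
def rootSpan (J : DeltaJordanLie K L) (H : Submodule K L)
    (S : Set (Module.Dual K H)) : Submodule K L :=
  Submodule.span K {z : L | ∃ β ∈ S, ∃ x ∈ J.rootSpace H β, ∃ y ∈ J.rootSpace H (-β),
    z = J.br x y}

/-- `L_S = H_S ⊕ V_S`, the subalgebra associated to a set of roots `S`. -/
def decIdeal (J : DeltaJordanLie K L) (H : Submodule K L)
    (S : Set (Module.Dual K H)) : Submodule K L :=
  rootSpan J H S ⊔ ⨆ β ∈ S, J.rootSpace H β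

namespace DeltaJordanLie

variable (J : DeltaJordanLie K L)

theorem delta_mul_self : J.delta * J.delta = 1 := by
  rcases J.delta_pm with h | h <;> rw [h] <;> norm_num

theorem delta_ne_zero : J.delta ≠ 0 := by
  rcases J.delta_pm with h | h <;> rw [h] <;> norm_num

theorem br_br_eq_zero {x y w : L} (hx : J.br x w = 0) (hy : J.br y w = 0) :
    J.br (J.br x y) w = 0 := by
  have hjac := J.jacobi x y w
  rw [hx, hy, map_zero, map_zero, smul_zero, add_zero] at hjac
  exact (smul_eq_zero.mp hjac.symm).resolve_left J.delta_ne_zero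

variable {H : Submodule K L}

theorem br_mem_rootSpace {β γ : Module.Dual K H} {x w : L} (hx : x ∈ J.rootSpace H β)
    (hw : w ∈ J.rootSpace H γ) : J.br x w ∈ J.rootSpace H (J.delta • (β + γ)) := by
  intro h
  rw [J.jacobi (h : L) x w, hx h, hw h]
  simp only [map_smul, LinearMap.smul_apply, LinearMap.add_apply, smul_eq_mul]
  module

theorem delta_smul_mem_roots (hsym : J.SymmetricRoots H) {β : Module.Dual K H}
    (hβ : β ∈ J.roots H) : J.delta • β ∈ J.roots H := by
  rcases J.delta_pm with h | h
  · rwa [h, one_smul]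
  · rw [h, neg_one_smul K β]
    exact hsym β hβ

end DeltaJordanLie

theorem connSum_congr {H : Submodule K L} (d : K) {f g : ℕ → Module.Dual K H} {k : ℕ}
    (h : ∀ i ≤ k, f i = g i) : connSum d f k = connSum d g k := by
  induction k with
  | zero => exact h 0 le_rfl
  | succ n ih =>
    rw [connSum, connSum, ih fun i hi => h i (hi.trans n.le_succ), h (n + 1) le_rfl]

theorem connSum_update_of_le {H : Submodule K L} (d : K) (f : ℕ → Module.Dual K H)
    {n k : ℕ} (ρ : Module.Dual K H) (hk : k ≤ n) :
    connSum d (Function.update f (n + 1) ρ) k = connSum d f k :=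
  connSum_congr d fun i hi => Function.update_of_ne (a' := n + 1) (by omega) ρ f

theorem connSum_update_succ {H : Submodule K L} (d : K) (f : ℕ → Module.Dual K H) (n : ℕ)
    (ρ : Module.Dual K H) :
    connSum d (Function.update f (n + 1) ρ) (n + 1) = d • (connSum d f n + ρ) := by
  rw [connSum, connSum_update_of_le d f ρ le_rfl, Function.update_self]

namespace IsConnection

variable {J : DeltaJordanLie K L} {H : Submodule K L} {α β : Module.Dual K H} {n : ℕ}
  {f : ℕ → Module.Dual K H}

theorem neg (hf : IsConnection J H α β n f) : IsConnection J H α (-β) n f :=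
  ⟨hf.1, hf.2.1, hf.2.2.1, hf.2.2.2.symm.imp_right fun h => by rw [h, neg_neg]⟩

theorem delta_smul (hf : IsConnection J H α β n f) : IsConnection J H α (J.delta • β) n f := by
  rcases J.delta_pm with h | h
  · rwa [h, one_smul]
  · rw [h, neg_one_smul K β]
    exact hf.neg

theorem connSum_mem_roots (hsym : J.SymmetricRoots H) (hf : IsConnection J H α β n f)
    (hβ : β ∈ J.roots H) : connSum J.delta f n ∈ J.roots H := by
  rcases hf.2.2.2 with h | h
  · rwa [h]
  · rw [h]
    exact hsym β hβ

theorem update_succ (hf : IsConnection J H α β n f) (hσ : connSum J.delta f n ∈ J.roots H)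
    {ρ : Module.Dual K H} (hρ : ρ ∈ J.roots H) :
    IsConnection J H α (J.delta • (connSum J.delta f n + ρ)) (n + 1)
      (Function.update f (n + 1) ρ) := by
  obtain ⟨hroots, hstart, hsums, -⟩ := hf
  refine ⟨fun i hi => ?_, ?_, fun k hk => ?_, Or.inl (connSum_update_succ _ f n ρ)⟩
  · rcases Nat.lt_or_eq_of_le hi with hi | rfl
    · rw [Function.update_of_ne (by omega)]
      exact hroots i (by omega)
    · rwa [Function.update_self]
  · rwa [Function.update_of_ne (by omega)]
  · rw [connSum_update_of_le _ f ρ (by omega)]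
    rcases Nat.lt_or_eq_of_le (Nat.le_of_lt_succ hk) with hk | rfl
    · exact hsums k hk
    · exact hσ

end IsConnection

section Connectivity

variable {J : DeltaJordanLie K L} {H : Submodule K L} {α β γ : Module.Dual K H}

theorem neg_mem_connectedRoots (hsym : J.SymmetricRoots H) (hβ : β ∈ connectedRoots J H α) :
    -β ∈ connectedRoots J H α :=
  let ⟨hβr, n, f, hf⟩ := hβ
  ⟨hsym β hβr, n, f, hf.neg⟩

/-- If `β ∈ Λ_α` and `δ(β + γ)` is a root, a connection to `β` extends to one to `γ`: by
`β + γ` if it ends at `-β`, and by `γ` and then `-δβ` if it ends at `β`. -/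
theorem mem_connectedRoots_of_delta_smul_add_mem_roots (hsym : J.SymmetricRoots H)
    (hβ : β ∈ connectedRoots J H α) (hγ : γ ∈ J.roots H)
    (hμ : J.delta • (β + γ) ∈ J.roots H) : γ ∈ connectedRoots J H α := by
  obtain ⟨hβr, n, f, hf⟩ := hβ
  refine ⟨hγ, ?_⟩
  rcases hf.2.2.2 with hend | hend
  · have hf₁ := hf.update_succ (hend ▸ hβr) hγ
    rw [hend] at hf₁
    have hf₂ := hf₁.update_succ (hf₁.connSum_mem_roots hsym hμ)
      (hsym _ (J.delta_smul_mem_roots hsym hβr))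
    rw [connSum_update_succ, hend, smul_add, smul_neg] at hf₂
    simp only [smul_smul, J.delta_mul_self, one_smul] at hf₂
    rw [add_neg_cancel_comm] at hf₂
    exact ⟨_, _, hf₂⟩
  · have hβγ : β + γ ∈ J.roots H := by
      simpa only [smul_smul, J.delta_mul_self, one_smul] using J.delta_smul_mem_roots hsym hμ
    have hf₁ := (hf.update_succ (hend ▸ hsym β hβr) hβγ).delta_smul
    rw [hend, neg_add_cancel_left, smul_smul, J.delta_mul_self, one_smul] at hf₁
    exact ⟨_, _, hf₁⟩

theorem br_eq_zero_of_notMem_connectedRoots (hsym : J.SymmetricRoots H)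
    (hβ : β ∈ connectedRoots J H α) (hγ : γ ∈ J.roots H) (hγn : γ ∉ connectedRoots J H α)
    {x w : L} (hx : x ∈ J.rootSpace H β) (hw : w ∈ J.rootSpace H γ) : J.br x w = 0 := by
  by_contra hne
  have hμ : J.rootSpace H (J.delta • (β + γ)) ≠ ⊥ := fun hbot =>
    hne <| (Submodule.mem_bot K).mp (hbot ▸ J.br_mem_rootSpace hx hw)
  by_cases hμ0 : J.delta • (β + γ) = 0
  · have hγβ : -β = γ :=
      neg_eq_of_add_eq_zero_right ((smul_eq_zero.mp hμ0).resolve_left J.delta_ne_zero)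
    exact hγn (hγβ ▸ neg_mem_connectedRoots hsym hβ)
  · exact hγn (mem_connectedRoots_of_delta_smul_add_mem_roots hsym hβ hγ ⟨hμ0, hμ⟩)

end Connectivity

theorem stmt6_general (J : DeltaJordanLie K L) (H : Submodule K L)
    (hsym : J.SymmetricRoots H) (α γ : Module.Dual K H)
    (hγ : γ ∈ J.roots H) (hγn : γ ∉ connectedRoots J H α) :
    ∀ β ∈ connectedRoots J H α, ∀ x ∈ J.rootSpace H β, ∀ y ∈ J.rootSpace H (-β),
      ∀ h : H, (h : L) = J.br x y → γ h = 0 := by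
  intro β hβ x hx y hy h hh
  obtain ⟨w, hw, hw0⟩ := (Submodule.ne_bot_iff _).mp hγ.2
  have hxw := br_eq_zero_of_notMem_connectedRoots hsym hβ hγ hγn hx hw
  have hyw := br_eq_zero_of_notMem_connectedRoots hsym (neg_mem_connectedRoots hsym hβ)
    hγ hγn hy hw
  have hγw : γ h • w = 0 := by
    rw [← hw h, hh, J.br_br_eq_zero hxw hyw]
  exact (smul_eq_zero.mp hγw).resolve_right hw0

/-- if `γ ∈ Λ` is not connected to `α`, then `γ([L_β, L_{-β}]) = 0`
for every `β ∈ Λ_α`. -/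
theorem stmt6 (J : DeltaJordanLie K L) (H : Submodule K L) (hs : J.IsSplitting H)
    (hsym : J.SymmetricRoots H) (α γ : Module.Dual K H)
    (hα : α ∈ J.roots H) (hγ : γ ∈ J.roots H) (hγn : γ ∉ connectedRoots J H α) :
    ∀ β ∈ connectedRoots J H α, ∀ x ∈ J.rootSpace H β, ∀ y ∈ J.rootSpace H (-β),
      ∀ h : H, (h : L) = J.br x y → γ h = 0 :=
  stmt6_general J H hsym α γ hγ hγn
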